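/- Let s : [0,∞) → ℝ be absolutely continuous and suppose s·ṡ ≤ −K̄·|s| almost everywhere for some constant K̄ > 0. Then s reaches zero in finite time: there exists T ≤ |s(0)|/K̄ such that s(T) = 0, and s(t) = 0 for all t ≥ T. -/

import Mathlib

open MeasureTheory Set

/-- Decrease lemma: if `s > 0` on `(a,b]` then `s b ≤ s a - K (b - a)`. -/
private lemma stmt3_decay (s s' : ℝ → ℝ) (K : ℝ)
    (hint : ∀ t : ℝ, 0 ≤ t → IntervalIntegrable s' volume 0 t)
    (hAC : ∀ t : ℝ, 0 ≤ t → s t = s 0 + ∫ τ in (0:ℝ)..t, s' τ)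
    (hineq : ∀ᵐ t ∂(volume.restrict (Set.Ici (0:ℝ))), s t * s' t ≤ -K * |s t|)
    (a b : ℝ) (ha : 0 ≤ a) (hab : a ≤ b)
    (hpos : ∀ u ∈ Ioc a b, 0 < s u) :
    s b ≤ s a - K * (b - a) := by
  have hb : (0:ℝ) ≤ b := le_trans ha hab
  have hib : IntervalIntegrable s' volume 0 b := hint b hb
  have hia : IntervalIntegrable s' volume 0 a := by
    refine hib.mono_set ?_
    rw [uIcc_of_le ha, uIcc_of_le hb]
    exact Icc_subset_Icc le_rfl hab
  have hiab : IntervalIntegrable s' volume a b := by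
    refine hib.mono_set ?_
    rw [uIcc_of_le hab, uIcc_of_le hb]
    exact Icc_subset_Icc ha le_rfl
  have hsplit : s b - s a = ∫ τ in a..b, s' τ := by
    rw [hAC b hb, hAC a ha, ← intervalIntegral.integral_add_adjacent_intervals hia hiab]
    ring
  -- a.e. bound on Icc a b
  have h1 : ∀ᵐ u ∂(volume.restrict (Icc a b)), s u * s' u ≤ -K * |s u| :=
    ae_restrict_of_ae_restrict_of_subset (fun u hu => le_trans ha hu.1) hineq
  have h2 : ∀ᵐ u ∂(volume.restrict (Icc a b)), u ∈ Icc a b :=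
    ae_restrict_mem measurableSet_Icc
  have h3 : ∀ᵐ u ∂(volume.restrict (Icc a b)), u ≠ a := by
    refine ae_iff.mpr ?_
    have : {u : ℝ | ¬ u ≠ a} = {a} := by ext u; simp
    rw [this]
    exact le_antisymm (le_trans (Measure.restrict_le_self _) (by simp)) bot_le
  have hae : ∀ᵐ u ∂(volume.restrict (Icc a b)), s' u ≤ -K := by
    filter_upwards [h1, h2, h3] with u hu1 hu2 hu3
    have husu : 0 < s u := hpos u ⟨lt_of_le_of_ne hu2.1 (Ne.symm hu3), hu2.2⟩
    have : s u * s' u ≤ s u * (-K) := by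
      rw [abs_of_pos husu] at hu1; nlinarith
    exact le_of_mul_le_mul_left this husu
  have hmono := intervalIntegral.integral_mono_ae_restrict hab hiab
    (intervalIntegrable_const (c := -K)) hae
  rw [intervalIntegral.integral_const] at hmono
  have : s b - s a ≤ (b - a) * (-K) := hsplit ▸ (by simpa using hmono)
  nlinarith

/-- Sign propagation by IVT: if `s` is nonzero on `uIcc x y` and `s y > 0` then `s x > 0`. -/
private lemma stmt3_sign (s : ℝ → ℝ) (hcont : ContinuousOn s (Ici 0))
    {x y : ℝ} (hx : 0 ≤ x) (hy : 0 ≤ y)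
    (hnz : ∀ u ∈ uIcc x y, s u ≠ 0) (hpos : 0 < s y) : 0 < s x := by
  by_contra h'
  push_neg at h'
  have hsub : uIcc x y ⊆ Ici 0 := by
    intro u hu
    rcases le_total x y with h | h
    · rw [uIcc_of_le h] at hu; exact le_trans hx hu.1
    · rw [uIcc_of_ge h] at hu; exact le_trans hy hu.1
  have hivt := intermediate_value_uIcc (hcont.mono hsub)
  have h0 : (0:ℝ) ∈ uIcc (s x) (s y) := by
    rw [uIcc_of_le (by linarith)]; exact ⟨h', hpos.le⟩
  obtain ⟨u, hu, hsu⟩ := hivt h0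
  exact hnz u hu hsu

/-- Finite-time reachability. If `s` is absolutely continuous on `[0,∞)`
(encoded by `s(t) = s(0) + ∫₀ᵗ s'` with `s'` locally integrable) and
`s·ṡ ≤ −K̄|s|` a.e. on `[0,∞)` with `K̄ > 0`, then there is `T ≤ |s(0)|/K̄`, `T ≥ 0`,
with `s(T) = 0` and `s(t) = 0` for all `t ≥ T`. -/
theorem stmt3
    (s s' : ℝ → ℝ) (K : ℝ) (hK : 0 < K)
    (hint : ∀ t : ℝ, 0 ≤ t → IntervalIntegrable s' volume 0 t)
    (hAC : ∀ t : ℝ, 0 ≤ t → s t = s 0 + ∫ τ in (0:ℝ)..t, s' τ)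
    (hineq : ∀ᵐ t ∂(volume.restrict (Set.Ici (0:ℝ))), s t * s' t ≤ -K * |s t|) :
    ∃ T : ℝ, 0 ≤ T ∧ T ≤ |s 0| / K ∧ s T = 0 ∧ ∀ t ≥ T, s t = 0 := by
  -- continuity of s on [0,∞)
  have hcont : ContinuousOn s (Ici 0) := by
    intro t ht
    have ht' : (0:ℝ) ≤ t := ht
    have hICC : ContinuousOn s (Icc 0 (t + 1)) := by
      have h1 : ContinuousOn (fun x => ∫ τ in (0:ℝ)..x, s' τ) (uIcc 0 (t + 1)) :=
        intervalIntegral.continuousOn_primitive_interval' (hint (t + 1) (by linarith [ht']))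
          left_mem_uIcc
      rw [uIcc_of_le (by linarith [ht'] : (0:ℝ) ≤ t + 1)] at h1
      exact (continuousOn_const.add h1).congr fun x hx => hAC x hx.1
    have hmem : Icc 0 (t + 1) ∈ nhdsWithin t (Ici 0) := by
      refine Filter.mem_of_superset
        (inter_mem_nhdsWithin _ (Iio_mem_nhds (by linarith : t < t + 1))) ?_
      rintro u ⟨hu1, hu2⟩
      exact ⟨hu1, le_of_lt hu2⟩
    exact (hICC.continuousWithinAt ⟨ht', by linarith⟩).mono_of_mem_nhdsWithin hmem
  -- negated-world hypotheses
  have hint' : ∀ t : ℝ, 0 ≤ t → IntervalIntegrable (fun τ => -s' τ) volume 0 t :=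
    fun t ht => (hint t ht).neg
  have hAC' : ∀ t : ℝ, 0 ≤ t → (-s) t = (-s) 0 + ∫ τ in (0:ℝ)..t, -s' τ := by
    intro t ht
    simp only [Pi.neg_apply, intervalIntegral.integral_neg]
    rw [hAC t ht]; ring
  have hineq' : ∀ᵐ t ∂(volume.restrict (Set.Ici (0:ℝ))),
      (-s) t * (-s' t) ≤ -K * |(-s) t| := by
    filter_upwards [hineq] with t h
    simpa using h
  have hcont' : ContinuousOn (-s) (Ici 0) := hcont.neg
  -- growth lemma for negative sign
  have growth : ∀ a b : ℝ, 0 ≤ a → a ≤ b → (∀ u ∈ Ioc a b, s u < 0) →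
      s a + K * (b - a) ≤ s b := by
    intro a b ha hab hneg
    have := stmt3_decay (-s) (fun τ => -s' τ) K hint' hAC' hineq' a b ha hab
      (fun u hu => by simpa using hneg u hu)
    simp only [Pi.neg_apply] at this
    linarith
  have decay := stmt3_decay s s' K hint hAC hineq
  -- stickiness: once zero, always zero
  have stick : ∀ t₀ : ℝ, 0 ≤ t₀ → s t₀ = 0 → ∀ t ≥ t₀, s t = 0 := by
    intro t₀ ht₀ hs0 t₁ ht₁
    by_contra hne
    have hlt : t₀ < t₁ := lt_of_le_of_ne ht₁ (by rintro rfl; exact hne hs0)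
    set Z : Set ℝ := Icc t₀ t₁ ∩ s ⁻¹' {0} with hZ
    have hZc : IsClosed Z :=
      ((hcont.mono (fun u hu => le_trans ht₀ hu.1)).preimage_isClosed_of_isClosed
        isClosed_Icc isClosed_singleton)
    have hZne : t₀ ∈ Z := ⟨⟨le_rfl, le_of_lt hlt⟩, hs0⟩
    have hbdd : BddAbove Z := ⟨t₁, fun u hu => hu.1.2⟩
    obtain ⟨t₂, ht₂Z, ht₂eq⟩ : ∃ t₂, t₂ ∈ Z ∧ t₂ = sSup Z :=
      ⟨_, hZc.csSup_mem ⟨t₀, hZne⟩ hbdd, rfl⟩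
    have ht₂0 : 0 ≤ t₂ := le_trans ht₀ ht₂Z.1.1
    have hst₂ : s t₂ = 0 := ht₂Z.2
    have ht₂lt : t₂ < t₁ :=
      lt_of_le_of_ne ht₂Z.1.2 (by rintro rfl; exact hne hst₂)
    have hnz : ∀ u ∈ Ioc t₂ t₁, s u ≠ 0 := by
      intro u hu h0
      have hle := le_csSup hbdd ⟨⟨le_trans ht₂Z.1.1 hu.1.le, hu.2⟩, h0⟩
      rw [← ht₂eq] at hle
      exact absurd hle (not_le.mpr hu.1)
    rcases lt_trichotomy (s t₁) 0 with hneg1 | h0 | hpos1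
    · -- s < 0 on (t₂, t₁]
      have hsneg : ∀ u ∈ Ioc t₂ t₁, s u < 0 := by
        intro u hu
        have hu0 : 0 ≤ u := le_trans ht₂0 hu.1.le
        have hnzv : ∀ v ∈ uIcc u t₁, (-s) v ≠ 0 := by
          intro v hv
          rw [uIcc_of_le hu.2] at hv
          simpa using hnz v ⟨lt_of_lt_of_le hu.1 hv.1, hv.2⟩
        have := stmt3_sign (-s) hcont' hu0 (le_trans hu0 hu.2) hnzv
          (by simpa using hneg1)
        simpa using this
      have := growth t₂ t₁ ht₂0 ht₂lt.le hsneg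
      rw [hst₂] at this
      nlinarith [hsneg t₁ ⟨ht₂lt, le_rfl⟩]
    · exact hne h0
    · -- s > 0 on (t₂, t₁]
      have hspos : ∀ u ∈ Ioc t₂ t₁, 0 < s u := by
        intro u hu
        have hu0 : 0 ≤ u := le_trans ht₂0 hu.1.le
        refine stmt3_sign s hcont hu0 (le_trans hu0 hu.2) ?_ hpos1
        intro v hv
        rw [uIcc_of_le hu.2] at hv
        exact hnz v ⟨lt_of_lt_of_le hu.1 hv.1, hv.2⟩
      have := decay t₂ t₁ ht₂0 ht₂lt.le hspos
      rw [hst₂] at this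
      nlinarith [hspos t₁ ⟨ht₂lt, le_rfl⟩]
  -- reaching: find a zero in [0, |s 0| / K]
  have hM0 : 0 ≤ |s 0| / K := div_nonneg (abs_nonneg _) hK.le
  have reach : ∃ T : ℝ, 0 ≤ T ∧ T ≤ |s 0| / K ∧ s T = 0 := by
    set M := |s 0| / K with hMdef
    rcases lt_trichotomy (s 0) 0 with hneg0 | h0 | hpos0
    · by_contra hno
      push_neg at hno
      have hnz : ∀ u ∈ Icc 0 M, s u ≠ 0 := by
        intro u hu h0
        exact hno u hu.1 hu.2 h0
      have hsneg : ∀ u ∈ Ioc 0 M, s u < 0 := by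
        intro u hu
        have hu0 : 0 ≤ u := hu.1.le
        have hnzv : ∀ v ∈ uIcc u 0, (-s) v ≠ 0 := by
          intro v hv
          rw [uIcc_comm, uIcc_of_le hu0] at hv
          simpa using hnz v ⟨hv.1, le_trans hv.2 hu.2⟩
        have := stmt3_sign (-s) hcont' hu0 le_rfl hnzv (by simpa using hneg0)
        simpa using this
      have := growth 0 M le_rfl hM0 hsneg
      have hM : M = -(s 0) / K := by rw [hMdef, abs_of_neg hneg0]
      have hKM : K * M = -(s 0) := by
        rw [hM]; field_simp
      simp only [sub_zero] at this
      rw [hKM] at this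
      have hMpos : 0 < M := by
        rw [hM]; exact div_pos (by linarith) hK
      have hsM := hsneg M ⟨hMpos, le_rfl⟩
      linarith
    · exact ⟨0, le_rfl, hM0, h0⟩
    · by_contra hno
      push_neg at hno
      have hnz : ∀ u ∈ Icc 0 M, s u ≠ 0 := by
        intro u hu h0
        exact hno u hu.1 hu.2 h0
      have hspos : ∀ u ∈ Ioc 0 M, 0 < s u := by
        intro u hu
        have hu0 : 0 ≤ u := hu.1.le
        refine stmt3_sign s hcont hu0 le_rfl (x := u) (y := 0) ?_ hpos0
        intro v hv
        rw [uIcc_comm, uIcc_of_le hu0] at hv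
        exact hnz v ⟨hv.1, le_trans hv.2 hu.2⟩
      have := decay 0 M le_rfl hM0 hspos
      have hM : M = s 0 / K := by rw [hMdef, abs_of_pos hpos0]
      have hKM : K * M = s 0 := by rw [hM]; field_simp
      have hMpos : 0 < M := by rw [hM]; exact div_pos hpos0 hK
      simp only [sub_zero] at this
      rw [hKM] at this
      have hsM := hspos M ⟨hMpos, le_rfl⟩
      linarith
  obtain ⟨T, hT0, hTle, hsT⟩ := reach
  exact ⟨T, hT0, hTle, hsT, stick T hT0 hsT⟩
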